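/- Let M be an MSC over P and Σ, let p, q ∈ P, let π, π' ∈ Π_{p,q}, and let e, f ∈ E_q with e → f and π→* ≼_e π'→* (where π→* denotes π followed by the letter →*). Then π' ≺_f π if and only if either (last_{π'}(f) = ⊥ and last_π(f) ≠ ⊥) or f_{π', →+π}(f) = f, where →+π denotes the word → →* followed by π. -/

import Mathlib

/-!
Write `g = last_π(f)` and `g' = last_{π'}(f)`; both lie on `p`. Then `g' < g` iff `g' →+ g`
iff some `(→+π)`-path runs from `g'` into `f`. It remains to see that such a path forces
`first_{→+π}(g') = f`. That first event `z₀` lies on `q` below `f`; if `z₀ ≠ f` then `z₀ →* e`,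
so the source `d` of its `π`-segment satisfies `g' < d ≤ last_{π→*}(e) ≤ last_{π'→*}(e) ≤ g'`,
the last step because `last_{π'}` is monotone along `→*`, which is where FIFO enters.
-/

namespace Gossip

/-- Events extended with bottom and top elements. -/
inductive ExtEv (E : Type) : Type where
  | bot : ExtEv E
  | evt (e : E) : ExtEv E
  | top : ExtEv E

/-- A message sequence chart (MSC) over processes `P`, alphabet `A`,
with (finite, nonempty) set of events `E`. -/
structure MSC (P A E : Type) : Type where
  fintypeE : Fintype E
  nonemptyE : Nonempty E
  loc : E → P
  lab : E → A
  /-- process successor relation `→` -/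
  next : E → E → Prop
  /-- message relation `◁` -/
  msg : E → E → Prop
  next_loc : ∀ {e f : E}, next e f → loc e = loc f
  next_irrefl : ∀ e : E, ¬ next e e
  next_right_unique : ∀ {e f f' : E}, next e f → next e f' → f = f'
  next_left_unique : ∀ {e e' f : E}, next e f → next e' f → e = e'
  next_total : ∀ e f : E, loc e = loc f →
      Relation.ReflTransGen next e f ∨ Relation.ReflTransGen next f e
  msg_loc : ∀ {e f : E}, msg e f → loc e ≠ loc f
  /-- every event belongs to at most one pair of `◁` -/
  msg_unique : ∀ {e f e' f' : E}, msg e f → msg e' f' →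
      (e = e' ∨ e = f' ∨ f = e' ∨ f = f') → e = e' ∧ f = f'
  fifo : ∀ {e f e' f' : E}, msg e f → msg e' f' → loc e = loc e' → loc f = loc f' →
      (Relation.ReflTransGen next e e' ↔ Relation.ReflTransGen next f f')
  /-- `≤ = (→ ∪ ◁)*` is a partial order -/
  causal_antisymm : ∀ {e f : E},
      Relation.ReflTransGen (fun x y => next x y ∨ msg x y) e f →
      Relation.ReflTransGen (fun x y => next x y ∨ msg x y) f e → e = f

namespace MSC

variable {P A E B : Type}

/-- the causal order `≤ = (→ ∪ ◁)*` -/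
def le (M : MSC P A E) : E → E → Prop :=
  Relation.ReflTransGen (fun x y => M.next x y ∨ M.msg x y)

/-- the strict causal order `<` -/
def lt (M : MSC P A E) (e f : E) : Prop := M.le e f ∧ e ≠ f

/-- `→*` -/
def nextStar (M : MSC P A E) : E → E → Prop := Relation.ReflTransGen M.next

/-- the causal order extended to `E ∪ {⊥,⊤}` with `⊥ < e < ⊤` -/
def extLe (M : MSC P A E) : ExtEv E → ExtEv E → Prop
  | .bot, _ => True
  | _, .top => True
  | .evt e, .evt f => M.le e f
  | _, _ => False

def extLt (M : MSC P A E) (x y : ExtEv E) : Prop := M.extLe x y ∧ x ≠ y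

/-- replace the labelling of an MSC (e.g. to pair it with an extra labelling) -/
def relabel (M : MSC P A E) (μ : E → B) : MSC P B E where
  fintypeE := M.fintypeE
  nonemptyE := M.nonemptyE
  loc := M.loc
  lab := μ
  next := M.next
  msg := M.msg
  next_loc := M.next_loc
  next_irrefl := M.next_irrefl
  next_right_unique := M.next_right_unique
  next_left_unique := M.next_left_unique
  next_total := M.next_total
  msg_loc := M.msg_loc
  msg_unique := M.msg_unique
  fifo := M.fifo
  causal_antisymm := M.causal_antisymm

end MSC

/-- letters of path expressions: `→`, `→*`, `p▷q`, `⟨a⟩` -/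
inductive PathLetter (P A : Type) : Type where
  | next : PathLetter P A
  | nextStar : PathLetter P A
  | msg (p q : P) : PathLetter P A
  | lab (a : A) : PathLetter P A

/-- path expressions: finite words over `Γ` -/
abbrev PathExpr (P A : Type) := List (PathLetter P A)

variable {P A E : Type}

def letterSem (M : MSC P A E) : PathLetter P A → E → E → Prop
  | .next => M.next
  | .nextStar => M.nextStar
  | .msg p q => fun e f => M.loc e = p ∧ M.loc f = q ∧ M.msg e f
  | .lab a => fun e f => e = f ∧ M.lab e = a

/-- `⟦π⟧` -/
def pathSem (M : MSC P A E) : PathExpr P A → E → E → Prop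
  | [] => fun e f => e = f
  | l :: π => fun e g => ∃ f, letterSem M l e f ∧ pathSem M π f g

def letterComp : PathLetter P A → P → P → Prop
  | .msg p q => fun x y => x = p ∧ y = q
  | _ => fun x y => x = y

/-- `Comp(π)`; `π ∈ Π_{p,q}` iff `pcomp π p q` -/
def pcomp : PathExpr P A → P → P → Prop
  | [] => fun x y => x = y
  | l :: π => fun x z => ∃ y, letterComp l x y ∧ pcomp π y z

/-- `IsLast M π e x` holds iff `x = last_π(e)` (with `x = ⊥` iff no `π`-path into `e`). -/
def IsLast (M : MSC P A E) (π : PathExpr P A) (e : E) : ExtEv E → Prop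
  | .bot => ∀ f, ¬ pathSem M π f e
  | .evt g => pathSem M π g e ∧ ∀ f, pathSem M π f e → M.le f g
  | .top => False

/-- `IsFirst M π e x` holds iff `x = first_π(e)` (with `x = ⊤` iff no `π`-path out of `e`). -/
def IsFirst (M : MSC P A E) (π : PathExpr P A) (e : E) : ExtEv E → Prop
  | .top => ∀ f, ¬ pathSem M π e f
  | .evt g => pathSem M π e g ∧ ∀ f, pathSem M π e f → M.le g f
  | .bot => False

/-- `IsFa M π π' e x` holds iff `x = f_{π,π'}(e) = first_{π'}(last_π(e))`, with
`first_{π'}(⊥) := ⊥`. -/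
def IsFa (M : MSC P A E) (π π' : PathExpr P A) (e : E) (x : ExtEv E) : Prop :=
  (IsLast M π e ExtEv.bot ∧ x = ExtEv.bot) ∨
    ∃ g, IsLast M π e (ExtEv.evt g) ∧ IsFirst M π' g x

/-- `IsLastProc M p e x` holds iff `x = last_p(e)`, the maximal event of process `p`
strictly below `e` (`⊥` if none). -/
def IsLastProc (M : MSC P A E) (p : P) (e : E) : ExtEv E → Prop
  | .bot => ∀ f, M.loc f = p → ¬ M.lt f e
  | .evt g => M.loc g = p ∧ M.lt g e ∧ ∀ f, M.loc f = p → M.lt f e → M.le f g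
  | .top => False

/-- `π ≼_e π'`, i.e. `last_π(e) ≤ last_{π'}(e)` -/
def ple (M : MSC P A E) (π π' : PathExpr P A) (e : E) : Prop :=
  ∃ x y, IsLast M π e x ∧ IsLast M π' e y ∧ M.extLe x y

def gossipSuffix : P → List P → PathExpr P A
  | _, [] => []
  | p, q :: w => PathLetter.msg p q :: PathLetter.nextStar :: gossipSuffix q w

/-- `π_w` for `w = p :: rest` -/
def gossipExpr (p : P) (w : List P) : PathExpr P A :=
  match w with
  | [] => [PathLetter.next, PathLetter.nextStar]
  | _ :: _ => PathLetter.nextStar :: gossipSuffix p w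

/-- `π ∈ Π^gossip` -/
def IsGossip (π : PathExpr P A) : Prop :=
  ∃ (p : P) (w : List P), (p :: w).Nodup ∧ π = gossipExpr p w

/-- actions of a CFM transition -/
inductive CAct (P A Msg : Type) : Type where
  | internal (a : A) : CAct P A Msg
  | send (a : A) (m : Msg) (q : P) : CAct P A Msg
  | recv (a : A) (m : Msg) (q : P) : CAct P A Msg

def CAct.labelOf {P A Msg : Type} : CAct P A Msg → A
  | .internal a => a
  | .send a _ _ => a
  | .recv a _ _ => a

/-- a communicating finite-state machine over `P` and `A` -/
structure CFM (P A : Type) : Type 1 where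
  Msg : Type
  msgFin : Fintype Msg
  S : Type
  sFin : Fintype S
  ι : P → S
  Δ : P → Set (S × CAct P A Msg × S)
  Acc : Set (P → S)
  wf_send : ∀ p s a m q s', (s, CAct.send a m q, s') ∈ Δ p → q ≠ p
  wf_recv : ∀ p s a m q s', (s, CAct.recv a m q, s') ∈ Δ p → q ≠ p

namespace CFM

variable {P A E : Type}

/-- `ρ` is a run of the CFM `C` on the MSC `M` -/
def IsRun (C : CFM P A) (M : MSC P A E) (ρ : E → C.S × CAct P A C.Msg × C.S) : Prop :=
  (∀ e, ρ e ∈ C.Δ (M.loc e)) ∧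
  (∀ e, ((ρ e).2.1).labelOf = M.lab e) ∧
  (∀ e, (¬ ∃ f, M.next f e) → (ρ e).1 = C.ι (M.loc e)) ∧
  (∀ e f, M.next e f → (ρ e).2.2 = (ρ f).1) ∧
  (∀ e, (¬ ∃ f, M.msg e f) → (¬ ∃ f, M.msg f e) → ∃ a, (ρ e).2.1 = CAct.internal a) ∧
  (∀ e f, M.msg e f → ∃ m, (ρ e).2.1 = CAct.send (M.lab e) m (M.loc f) ∧
      (ρ f).2.1 = CAct.recv (M.lab f) m (M.loc e))

/-- the run `ρ` is accepting -/
def IsAccepting (C : CFM P A) (M : MSC P A E)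
    (ρ : E → C.S × CAct P A C.Msg × C.S) : Prop :=
  ∃ s : P → C.S, s ∈ C.Acc ∧ ∀ p,
    ((∃ e, M.loc e = p) → ∃ e, M.loc e = p ∧ (¬ ∃ f, M.next e f) ∧ s p = (ρ e).2.2) ∧
    ((¬ ∃ e, M.loc e = p) → s p = C.ι p)

/-- `M ∈ L(C)` -/
def Accepts (C : CFM P A) (M : MSC P A E) : Prop :=
  ∃ ρ, C.IsRun M ρ ∧ C.IsAccepting M ρ

/-- deterministic CFMs -/
def Deterministic (C : CFM P A) : Prop :=
  ∀ p s γ₁ s₁ γ₂ s₂, (s, γ₁, s₁) ∈ C.Δ p → (s, γ₂, s₂) ∈ C.Δ p →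
    CAct.labelOf γ₁ = CAct.labelOf γ₂ →
    ((∀ a₁ a₂, γ₁ = CAct.internal a₁ → γ₂ = CAct.internal a₂ → s₁ = s₂) ∧
     (∀ a₁ m₁ a₂ m₂ q, γ₁ = CAct.send a₁ m₁ q → γ₂ = CAct.send a₂ m₂ q →
        s₁ = s₂ ∧ m₁ = m₂) ∧
     (∀ a₁ a₂ m q, γ₁ = CAct.recv a₁ m q → γ₂ = CAct.recv a₂ m q → s₁ = s₂))

end CFM

/-- acceptance of the extended MSC `(M, ξ)` by a CFM over a product alphabet -/
def AcceptsExt {P A E Ξ : Type} (C : CFM P (A × Ξ)) (M : MSC P A E) (ξ : E → Ξ) : Prop :=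
  C.Accepts (M.relabel fun e => (M.lab e, ξ e))

/-- apply `μ` to an extended event, sending both `⊥` and `⊤` to `none` -/
def extToOptMap {E Θ : Type} (μ : E → Θ) : ExtEv E → Option Θ
  | .evt g => some (μ g)
  | _ => none

/-- apply `μ` to an extended event, preserving `⊥` and `⊤` -/
def extMap {E Θ : Type} (μ : E → Θ) : ExtEv E → ExtEv Θ
  | .bot => ExtEv.bot
  | .evt g => ExtEv.evt (μ g)
  | .top => ExtEv.top

/-- formulas of the temporal logic TL -/
inductive TL (P A : Type) : Type where
  | lab (a : A) : TL P A
  | proc (p : P) : TL P A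
  | disj (φ ψ : TL P A) : TL P A
  | neg (φ : TL P A) : TL P A
  | co (φ : TL P A) : TL P A
  | tuntil (φ ψ : TL P A) : TL P A
  | tsince (φ ψ : TL P A) : TL P A

/-- `M, e ⊨ φ` -/
def TLsat (M : MSC P A E) : TL P A → E → Prop
  | .lab a, e => M.lab e = a
  | .proc p, e => M.loc e = p
  | .disj φ ψ, e => TLsat M φ e ∨ TLsat M ψ e
  | .neg φ, e => ¬ TLsat M φ e
  | .co φ, e => ∃ f, ¬ M.le e f ∧ ¬ M.le f e ∧ TLsat M φ f
  | .tuntil φ ψ, e => ∃ f, M.lt e f ∧ TLsat M ψ f ∧ ∀ g, M.lt e g → M.lt g f → TLsat M φ g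
  | .tsince φ ψ, e => ∃ f, M.lt f e ∧ TLsat M ψ f ∧ ∀ g, M.lt f g → M.lt g e → TLsat M φ g

end Gossip

namespace Gossip

namespace MSC

variable {P A E : Type} (M : MSC P A E)

lemma le_of_next {a b : E} (h : M.next a b) : M.le a b :=
  Relation.ReflTransGen.single (Or.inl h)

lemma le_of_nextStar {a b : E} (h : M.nextStar a b) : M.le a b :=
  Relation.ReflTransGen.mono (fun _ _ => Or.inl) _ _ h

lemma le_trans {a b c : E} (hab : M.le a b) (hbc : M.le b c) : M.le a c :=
  Relation.ReflTransGen.trans hab hbc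

lemma loc_eq_of_nextStar {a b : E} (h : M.nextStar a b) : M.loc a = M.loc b := by
  induction h with
  | refl => rfl
  | tail _ hstep ih => exact ih.trans (M.next_loc hstep)

lemma nextStar_of_le {a b : E} (h : M.le a b) (hloc : M.loc a = M.loc b) : M.nextStar a b := by
  rcases M.next_total a b hloc with hab | hba
  · exact hab
  · rw [M.causal_antisymm h (M.le_of_nextStar hba)]
    exact Relation.ReflTransGen.refl

lemma lt_of_next_of_le {a b c : E} (hab : M.next a b) (hbc : M.le b c) : M.lt a c := by
  refine ⟨M.le_trans (M.le_of_next hab) hbc, ?_⟩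
  rintro rfl
  exact M.next_irrefl a (M.causal_antisymm (M.le_of_next hab) hbc ▸ hab)

lemma extLt_evt_iff {a b : E} : M.extLt (.evt a) (.evt b) ↔ M.lt a b :=
  and_congr_right' (not_congr ⟨ExtEv.evt.inj, congrArg _⟩)

lemma not_extLt_bot (x : ExtEv E) : ¬ M.extLt x .bot := by
  rintro ⟨hle, hne⟩
  cases x
  exacts [hne rfl, hle, hle]

end MSC

variable {P A E : Type} {M : MSC P A E}

lemma pathSem_append {σ τ : PathExpr P A} {a c : E} :
    pathSem M (σ ++ τ) a c ↔ ∃ b, pathSem M σ a b ∧ pathSem M τ b c := by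
  induction σ generalizing a with
  | nil => exact ⟨fun h => ⟨a, rfl, h⟩, by rintro ⟨b, rfl, h⟩; exact h⟩
  | cons l σ ih =>
    constructor
    · rintro ⟨d, hd, hdc⟩
      obtain ⟨b, hdb, hbc⟩ := ih.mp hdc
      exact ⟨b, ⟨d, hd, hdb⟩, hbc⟩
    · rintro ⟨b, ⟨d, hd, hdb⟩, hbc⟩
      exact ⟨d, hd, ih.mpr ⟨b, hdb, hbc⟩⟩

lemma pathSem_append_nextStar {π : PathExpr P A} {a c : E} :
    pathSem M (π ++ [.nextStar]) a c ↔ ∃ b, pathSem M π a b ∧ M.nextStar b c := by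
  simp only [pathSem_append, pathSem, letterSem, exists_eq_right]

lemma loc_eq_iff_of_pathSem {π : PathExpr P A} {p q : P} {a b : E}
    (h : pathSem M π a b) (hπ : pcomp π p q) : M.loc a = p ↔ M.loc b = q := by
  induction π generalizing a p with
  | nil =>
    obtain rfl : a = b := h
    obtain rfl : p = q := hπ
    rfl
  | cons l π ih =>
    obtain ⟨c, hac, hcb⟩ := h
    obtain ⟨r, hpr, hrq⟩ := hπ
    have hc := ih hcb hrq
    cases l with
    | next => obtain rfl : p = r := hpr; rw [M.next_loc hac, hc]
    | nextStar => obtain rfl : p = r := hpr; rw [M.loc_eq_of_nextStar hac, hc]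
    | lab => obtain rfl : p = r := hpr; obtain ⟨rfl, -⟩ := hac; exact hc
    | msg p₀ q₀ =>
      obtain ⟨rfl, rfl⟩ := hpr
      obtain ⟨hap, hcq, -⟩ := hac
      exact iff_of_true hap (hc.mp hcq)

/-- Convexity of `⟦π⟧` along `→*` at both ends; the message case is the FIFO axiom. -/
lemma pathSem_of_nextStar_of_nextStar {π : PathExpr P A} {y k z g : E}
    (hyk : pathSem M π y k) (hzg : pathSem M π z g) (hzy : M.nextStar z y)
    (hkg : M.nextStar k g) : pathSem M π y g := by
  induction π generalizing y z with
  | nil =>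
    obtain rfl : y = k := hyk
    obtain rfl : z = g := hzg
    exact M.causal_antisymm (M.le_of_nextStar hkg) (M.le_of_nextStar hzy)
  | cons l π ih =>
    obtain ⟨y₁, hyy₁, hy₁k⟩ := hyk
    obtain ⟨z₁, hzz₁, hz₁g⟩ := hzg
    cases l with
    | next =>
      rcases Relation.ReflTransGen.cases_head hzy with rfl | ⟨w, hzw, hwy⟩
      · obtain rfl := M.next_right_unique hzz₁ hyy₁
        exact ⟨z₁, hyy₁, hz₁g⟩
      · obtain rfl := M.next_right_unique hzw hzz₁
        exact ⟨y₁, hyy₁, ih hy₁k hz₁g (hwy.tail hyy₁)⟩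
    | nextStar =>
      have hloc := (M.loc_eq_of_nextStar hzz₁).symm.trans (M.loc_eq_of_nextStar hzy)
      rcases M.next_total z₁ y hloc with hz₁y | hyz₁
      · exact ⟨y₁, hyy₁, ih hy₁k hz₁g (hz₁y.trans hyy₁)⟩
      · exact ⟨z₁, hyz₁, hz₁g⟩
    | lab =>
      obtain ⟨rfl, hlab⟩ := hyy₁
      obtain ⟨rfl, -⟩ := hzz₁
      exact ⟨y, ⟨rfl, hlab⟩, ih hy₁k hz₁g hzy⟩
    | msg =>
      obtain ⟨hyp, hy₁q, hmy⟩ := hyy₁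
      obtain ⟨hzp, hz₁q, hmz⟩ := hzz₁
      have hz₁y₁ := (M.fifo hmz hmy (hzp.trans hyp.symm) (hz₁q.trans hy₁q.symm)).mp hzy
      exact ⟨y₁, ⟨hyp, hy₁q, hmy⟩, ih hy₁k hz₁g hz₁y₁⟩

lemma IsLast.eq {π : PathExpr P A} {e : E} {x y : ExtEv E}
    (hx : IsLast M π e x) (hy : IsLast M π e y) : x = y := by
  cases x <;> cases y
  all_goals first
    | rfl
    | exact hx.elim
    | exact hy.elim
    | exact (hx _ hy.1).elim
    | exact (hy _ hx.1).elim
    | exact congrArg _ (M.causal_antisymm (hy.2 _ hx.1) (hx.2 _ hy.1))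

lemma IsFa.isFirst {π π' : PathExpr P A} {e g : E} {x : ExtEv E}
    (hx : IsFa M π π' e x) (hg : IsLast M π e (.evt g)) : IsFirst M π' g x := by
  rcases hx with ⟨hbot, -⟩ | ⟨g', hg', hfirst⟩
  · exact (hbot g hg.1).elim
  · obtain rfl : g' = g := ExtEv.evt.inj (hg'.eq hg)
    exact hfirst

lemma IsFa.exists_pathSem_of_eq_evt {π π' : PathExpr P A} {e y : E}
    (hx : IsFa M π π' e (.evt y)) : ∃ g, IsLast M π e (.evt g) ∧ pathSem M π' g y := by
  rcases hx with ⟨-, h⟩ | ⟨g, hg, hfirst⟩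
  · cases h
  · exact ⟨g, hg, hfirst.1⟩

/-- `last_π` is monotone along `→*`. -/
lemma IsLast.le_of_pathSem_of_nextStar {π : PathExpr P A} {p q : P} (hπ : pcomp π p q)
    {f g v k : E} (hf : M.loc f = q) (hg : IsLast M π f (.evt g))
    (hv : pathSem M π v k) (hkf : M.nextStar k f) : M.le v g := by
  have hgp : M.loc g = p := (loc_eq_iff_of_pathSem hg.1 hπ).mpr hf
  have hvp : M.loc v = p := (loc_eq_iff_of_pathSem hv hπ).mpr ((M.loc_eq_of_nextStar hkf).trans hf)
  rcases M.next_total v g (hvp.trans hgp.symm) with hvg | hgv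
  · exact M.le_of_nextStar hvg
  · exact hg.2 v (pathSem_of_nextStar_of_nextStar hv hg.1 hgv hkf)

lemma IsLast.lt_of_pathSem_next_nextStar {π : PathExpr P A} {f g g' : E}
    (hg : IsLast M π f (.evt g)) (h : pathSem M (.next :: .nextStar :: π) g' f) : M.lt g' g := by
  obtain ⟨c, hg'c, d, hcd, hdf⟩ := h
  exact M.lt_of_next_of_le hg'c (M.le_trans (M.le_of_nextStar hcd) (hg.2 d hdf))

lemma pathSem_next_nextStar_of_lt {π : PathExpr P A} {f g g' : E} (hg : pathSem M π g f)
    (hlt : M.lt g' g) (hloc : M.loc g' = M.loc g) :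
    pathSem M (.next :: .nextStar :: π) g' f := by
  rcases Relation.ReflTransGen.cases_head (M.nextStar_of_le hlt.1 hloc)
    with heq | ⟨c, hg'c, hcg⟩
  · exact (hlt.2 heq).elim
  · exact ⟨c, hg'c, g, hcg, hg⟩

lemma IsLast.le_of_extLe_append_nextStar {π π' : PathExpr P A} {p q : P} (hπ' : pcomp π' p q)
    {e f g' d : E} {u v : ExtEv E} (hg' : IsLast M π' f (.evt g'))
    (hu : IsLast M (π ++ [.nextStar]) e u) (hv : IsLast M (π' ++ [.nextStar]) e v)
    (huv : M.extLe u v) (hf : M.loc f = q) (hef : M.nextStar e f)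
    (hd : pathSem M (π ++ [.nextStar]) d e) : M.le d g' := by
  cases u with
  | bot => exact (hu d hd).elim
  | top => exact hu.elim
  | evt u₀ =>
    cases v with
    | bot => exact huv.elim
    | top => exact hv.elim
    | evt v₀ =>
      obtain ⟨k, hv₀k, hke⟩ := pathSem_append_nextStar.mp hv.1
      have hv₀g' := hg'.le_of_pathSem_of_nextStar hπ' hf hv₀k (hke.trans hef)
      exact M.le_trans (hu.2 d hd) (M.le_trans huv hv₀g')

lemma IsFirst.eq_evt_of_lt {π π' : PathExpr P A} {p q : P} (hπ : pcomp π p q) (hπ' : pcomp π' p q)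
    {e f g g' : E} {u v z : ExtEv E} (hf : M.loc f = q) (hef : M.next e f)
    (hu : IsLast M (π ++ [.nextStar]) e u) (hv : IsLast M (π' ++ [.nextStar]) e v)
    (huv : M.extLe u v) (hg : IsLast M π f (.evt g)) (hg' : IsLast M π' f (.evt g'))
    (hz : IsFirst M (.next :: .nextStar :: π) g' z) (hlt : M.lt g' g) : z = .evt f := by
  have hg'p : M.loc g' = p := (loc_eq_iff_of_pathSem hg'.1 hπ').mpr hf
  have hgp : M.loc g = p := (loc_eq_iff_of_pathSem hg.1 hπ).mpr hf
  have hpath := pathSem_next_nextStar_of_lt hg.1 hlt (hg'p.trans hgp.symm)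
  cases z with
  | bot => exact hz.elim
  | top => exact (hz f hpath).elim
  | evt z₀ =>
    obtain ⟨⟨c, hg'c, d, hcd, hdz₀⟩, hmin⟩ := hz
    have hdp : M.loc d = p := by rw [← M.loc_eq_of_nextStar hcd, ← M.next_loc hg'c, hg'p]
    have hz₀q : M.loc z₀ = q := (loc_eq_iff_of_pathSem hdz₀ hπ).mp hdp
    rcases Relation.ReflTransGen.cases_tail (M.nextStar_of_le (hmin f hpath) (hz₀q.trans hf.symm))
      with rfl | ⟨w, hz₀w, hwf⟩
    · rfl
    · obtain rfl := M.next_left_unique hwf hef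
      have hdg' := hg'.le_of_extLe_append_nextStar hπ' hu hv huv hf (.single hef)
        (pathSem_append_nextStar.mpr ⟨z₀, hdz₀, hz₀w⟩)
      exact ((M.lt_of_next_of_le hg'c (M.le_trans (M.le_of_nextStar hcd) hdg')).2 rfl).elim

end Gossip

open Gossip in
theorem stmt8_general {P A E : Type} (M : MSC P A E)
    (p q : P) (π π' : PathExpr P A)
    (hπ : pcomp π p q) (hπ' : pcomp π' p q)
    (e f : E) (hf : M.loc f = q) (hef : M.next e f)
    (u v : ExtEv E)
    (hu : IsLast M (π ++ [PathLetter.nextStar]) e u)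
    (hv : IsLast M (π' ++ [PathLetter.nextStar]) e v)
    (huv : M.extLe u v)
    (x x' z : ExtEv E)
    (hx : IsLast M π f x) (hx' : IsLast M π' f x')
    (hz : IsFa M π' (PathLetter.next :: PathLetter.nextStar :: π) f z) :
    M.extLt x' x ↔ ((x' = ExtEv.bot ∧ x ≠ ExtEv.bot) ∨ z = ExtEv.evt f) := by
  cases x with
  | top => exact hx.elim
  | bot =>
    refine iff_of_false (M.not_extLt_bot x') ?_
    rintro (⟨-, hne⟩ | rfl)
    · exact hne rfl
    · obtain ⟨-, -, -, -, d, -, hdf⟩ := hz.exists_pathSem_of_eq_evt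
      exact hx d hdf
  | evt g =>
    cases x' with
    | top => exact hx'.elim
    | bot => exact iff_of_true ⟨trivial, nofun⟩ (.inl ⟨rfl, nofun⟩)
    | evt g' =>
      have hz' := hz.isFirst hx'
      rw [MSC.extLt_evt_iff]
      constructor
      · exact fun hlt => .inr (hz'.eq_evt_of_lt hπ hπ' hf hef hu hv huv hx hx' hlt)
      · rintro (⟨h, -⟩ | rfl)
        · cases h
        · exact hx.lt_of_pathSem_next_nextStar hz'.1

open Gossip in
/-- Lemma 3.3: if `e → f` and `π→* ≼_e π'→*`, then
`π' ≺_f π` iff (`last_{π'}(f) = ⊥` and `last_π(f) ≠ ⊥`) or `f_{π', →+π}(f) = f`. -/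
theorem stmt8 {P A E : Type} [Fintype P] [Fintype A] (M : MSC P A E)
    (p q : P) (π π' : PathExpr P A)
    (hπ : pcomp π p q) (hπ' : pcomp π' p q)
    (e f : E) (he : M.loc e = q) (hf : M.loc f = q) (hef : M.next e f)
    (u v : ExtEv E)
    (hu : IsLast M (π ++ [PathLetter.nextStar]) e u)
    (hv : IsLast M (π' ++ [PathLetter.nextStar]) e v)
    (huv : M.extLe u v)
    (x x' z : ExtEv E)
    (hx : IsLast M π f x) (hx' : IsLast M π' f x')
    (hz : IsFa M π' (PathLetter.next :: PathLetter.nextStar :: π) f z) :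
    M.extLt x' x ↔ ((x' = ExtEv.bot ∧ x ≠ ExtEv.bot) ∨ z = ExtEv.evt f) :=
  stmt8_general M p q π π' hπ hπ' e f hf hef u v hu hv huv x x' z hx hx' hz
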